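/- arXiv:1307.0393 — 3 statements merged into one kernel-verified Lean document; each statement's English description precedes it below -/
import Mathlib

section
/- Let L_3 = U^{⊕3} ⊕ E8(-1)^{⊕2} ⊕ ⟨-4⟩. If v ∈ L_3 is a primitive vector with div(v) = 2, then v² ≡ -4 (mod 8). -/
open Matrix

/-- Gram matrix of the hyperbolic plane `U`. -/
def U2 : Matrix (Fin 2) (Fin 2) ℤ := !![0, 1; 1, 0]

/-- Gram matrix of the negative definite `E8(-1)` lattice. -/
def E8neg : Matrix (Fin 8) (Fin 8) ℤ :=
  !![-2, 1, 0, 0, 0, 0, 0, 0;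
      1,-2, 1, 0, 0, 0, 0, 0;
      0, 1,-2, 1, 0, 0, 0, 0;
      0, 0, 1,-2, 1, 0, 0, 0;
      0, 0, 0, 1,-2, 1, 0, 1;
      0, 0, 0, 0, 1,-2, 1, 0;
      0, 0, 0, 0, 0, 1,-2, 0;
      0, 0, 0, 0, 1, 0, 0,-2]

/-- Index type of the unimodular summand `U^3 ⊕ E8(-1)^2`. -/
abbrev KIdx := (Fin 2 ⊕ (Fin 2 ⊕ Fin 2)) ⊕ (Fin 8 ⊕ Fin 8)

/-- Gram matrix of `U^3 ⊕ E8(-1)^2`. -/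
def GramK : Matrix KIdx KIdx ℤ :=
  Matrix.fromBlocks
    (Matrix.fromBlocks U2 0 0 (Matrix.fromBlocks U2 0 0 U2)) 0 0
    (Matrix.fromBlocks E8neg 0 0 E8neg)

/-- Index type of `L_n = U^3 ⊕ E8(-1)^2 ⊕ ⟨-(2n-2)⟩`. -/
abbrev LIdx := KIdx ⊕ Fin 1

/-- Gram matrix of `L_n = U^3 ⊕ E8(-1)^2 ⊕ ⟨-(2n-2)⟩`. -/
def GramL (n : ℕ) : Matrix LIdx LIdx ℤ :=
  Matrix.fromBlocks GramK 0 0 !![-(2 * (n : ℤ) - 2)]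

/-- The bilinear form of `L_n`. -/
def bil (n : ℕ) (v w : LIdx → ℤ) : ℤ := v ⬝ᵥ ((GramL n).mulVec w)

/-- The `ℚ`-bilinear extension of the form of `L_n` to `L_n ⊗ ℚ`. -/
def bilQ (n : ℕ) (v w : LIdx → ℚ) : ℚ :=
  v ⬝ᵥ (((GramL n).map (Int.cast : ℤ → ℚ)).mulVec w)

/-- The inclusion `L_n ↪ L_n ⊗ ℚ`. -/
def toQ (v : LIdx → ℤ) : LIdx → ℚ := fun i => (v i : ℚ)

/-- The generator `δ` of the summand `⟨-(2n-2)⟩`. -/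
def deltaVec : LIdx → ℤ := fun i => if i = Sum.inr 0 then 1 else 0

/-- A lattice vector is primitive if it is not a nontrivial multiple of
another lattice vector. -/
def IsPrimitive (v : LIdx → ℤ) : Prop :=
  ∀ (k : ℤ) (w : LIdx → ℤ), v = k • w → IsUnit k

/-- `HasDiv n v m` says that `div(v) = m`, i.e. `(v, L_n) = mℤ`. -/
def HasDiv (n : ℕ) (v : LIdx → ℤ) (m : ℤ) : Prop :=
  Ideal.span (Set.range fun w => bil n v w) = Ideal.span {m}

/- ### Auxiliary material -/

/-- Inverse of `E8neg` (it is unimodular). -/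
def E8inv : Matrix (Fin 8) (Fin 8) ℤ :=
  !![-2,-3,-4,-5,-6,-4,-2,-3;
     -3,-6,-8,-10,-12,-8,-4,-6;
     -4,-8,-12,-15,-18,-12,-6,-9;
     -5,-10,-15,-20,-24,-16,-8,-12;
     -6,-12,-18,-24,-30,-20,-10,-15;
     -4,-8,-12,-16,-20,-14,-7,-10;
     -2,-4,-6,-8,-10,-7,-4,-5;
     -3,-6,-9,-12,-15,-10,-5,-8]

/-- Inverse of `GramK`. -/
def invK : Matrix KIdx KIdx ℤ :=
  Matrix.fromBlocks
    (Matrix.fromBlocks U2 0 0 (Matrix.fromBlocks U2 0 0 U2)) 0 0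
    (Matrix.fromBlocks E8inv 0 0 E8inv)

lemma GramK_mul_invK : GramK * invK = 1 := by decide

/-- Half of `U2`. -/
def NU : Matrix (Fin 2) (Fin 2) ℤ := !![0, 1; 0, 0]

/-- Half of `E8neg`. -/
def NE8 : Matrix (Fin 8) (Fin 8) ℤ :=
  !![-1, 1, 0, 0, 0, 0, 0, 0;
      0,-1, 1, 0, 0, 0, 0, 0;
      0, 0,-1, 1, 0, 0, 0, 0;
      0, 0, 0,-1, 1, 0, 0, 0;
      0, 0, 0, 0,-1, 1, 0, 1;
      0, 0, 0, 0, 0,-1, 1, 0;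
      0, 0, 0, 0, 0, 0,-1, 0;
      0, 0, 0, 0, 0, 0, 0,-1]

/-- Half of `GramK`, witnessing evenness of the lattice. -/
def NK : Matrix KIdx KIdx ℤ :=
  Matrix.fromBlocks
    (Matrix.fromBlocks NU 0 0 (Matrix.fromBlocks NU 0 0 NU)) 0 0
    (Matrix.fromBlocks NE8 0 0 NE8)

lemma GramK_eq_NK : GramK = NK + NKᵀ := by decide

lemma even_lattice (y : KIdx → ℤ) : y ⬝ᵥ GramK.mulVec y = 2 * (y ⬝ᵥ NK.mulVec y) := by
  have h : y ⬝ᵥ NKᵀ.mulVec y = y ⬝ᵥ NK.mulVec y := by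
    rw [Matrix.mulVec_transpose, dotProduct_comm, Matrix.dotProduct_mulVec]
  rw [GramK_eq_NK, Matrix.add_mulVec, dotProduct_add, h]
  ring

/-- in `L_3`, a primitive vector of divisor 2 has `v² ≡ -4 (mod 8)`. -/
theorem stmt_2 (v : LIdx → ℤ) (hprim : IsPrimitive v) (hdiv : HasDiv 3 v 2) :
    bil 3 v v ≡ -4 [ZMOD 8] := by
  have h2 : ∀ w, (2 : ℤ) ∣ bil 3 v w := by
    intro w
    have hmem : bil 3 v w ∈ Ideal.span (Set.range fun w => bil 3 v w) :=
      Ideal.subset_span ⟨w, rfl⟩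
    rw [hdiv, Ideal.mem_span_singleton] at hmem
    exact hmem
  set x : KIdx → ℤ := fun i => v (Sum.inl i) with hxdef
  set a : ℤ := v (Sum.inr 0) with hadef
  -- the pairings with the unimodular block are all even
  have hu : ∀ j : KIdx, (2 : ℤ) ∣ (x ᵥ* GramK) j := by
    intro j
    have hkey : bil 3 v (Pi.single (Sum.inl j) 1) = (x ᵥ* GramK) j := by
      simp [bil, Matrix.mulVec_single, dotProduct, Matrix.vecMul, GramL,
        Fintype.sum_sum_type, hxdef]
    rw [← hkey]
    exact h2 _
  -- hence x itself is even, by unimodularity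
  have hx2 : ∀ i, (2 : ℤ) ∣ x i := by
    have hxv : x = (x ᵥ* GramK) ᵥ* invK := by
      rw [Matrix.vecMul_vecMul, GramK_mul_invK, Matrix.vecMul_one]
    intro i
    rw [hxv]
    simp only [Matrix.vecMul, dotProduct]
    exact Finset.dvd_sum fun j _ => (hu j).mul_right _
  -- a is odd, by primitivity
  have hao : ¬ (2 : ℤ) ∣ a := by
    intro h2a
    have hdvd : ∀ i, (2 : ℤ) ∣ v i := by
      intro i
      cases i with
      | inl j => exact hx2 j
      | inr j =>
        have : j = 0 := Subsingleton.elim _ _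
        rw [this]; exact h2a
    have hv2 : v = (2 : ℤ) • fun i => v i / 2 := by
      funext i
      rw [Pi.smul_apply, smul_eq_mul, Int.mul_ediv_cancel' (hdvd i)]
    have := hprim 2 _ hv2
    rw [Int.isUnit_iff] at this
    omega
  obtain ⟨k, hk⟩ : Odd a := Int.odd_iff.mpr (by omega)
  -- split the form
  have hsplit : bil 3 v v = x ⬝ᵥ GramK.mulVec x - 4 * a ^ 2 := by
    simp [bil, GramL, dotProduct, Matrix.mulVec, Fintype.sum_sum_type, hxdef, hadef]
    ring
  -- x = 2 y
  set y : KIdx → ℤ := fun i => x i / 2 with hydef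
  have hxy : x = (2 : ℤ) • y := by
    funext i
    rw [Pi.smul_apply, smul_eq_mul, Int.mul_ediv_cancel' (hx2 i)]
  have hQ : x ⬝ᵥ GramK.mulVec x = 8 * (y ⬝ᵥ NK.mulVec y) := by
    rw [hxy, smul_dotProduct, Matrix.mulVec_smul, dotProduct_smul,
      even_lattice]
    simp only [smul_eq_mul]
    ring
  have hfin : bil 3 v v = 8 * ((y ⬝ᵥ NK.mulVec y) - 2 * k ^ 2 - 2 * k) - 4 := by
    rw [hsplit, hQ, hk]; ring
  show bil 3 v v % 8 = (-4) % 8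
  omega
end

section
/- Let L_3 = U^{⊕3} ⊕ E8(-1)^{⊕2} ⊕ ⟨-4⟩. If v ∈ L_3 is a primitive vector with div(v) = 4, then v² ≡ -4 (mod 32). -/
open Matrix

/-!
Write `v = u + a δ` with `u` in the unimodular lattice `K = U^3 ⊕ E8(-1)^2`. The pairings of `v`
with `K` are those of `u`, so they all lie in `4ℤ`, and unimodularity of `K` gives `u ∈ 4K`;
primitivity then forces `a` to be odd. Since `K` is even, `u² ∈ 16 · 2ℤ`, hence
`v² = u² - 4a² ≡ -4a² ≡ -4 (mod 32)`, odd squares being `1 mod 8`.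
-/

section LinearAlgebra

variable {ι R : Type*} [Fintype ι] [CommRing R]

lemma Matrix.dvd_of_forall_dvd_vecMul [DecidableEq ι] {G G' : Matrix ι ι R} (hG : G * G' = 1)
    {d : R} {u : ι → R} (h : ∀ i, d ∣ (u ᵥ* G) i) (i : ι) : d ∣ u i := by
  rw [← vecMul_one u, ← hG, ← vecMul_vecMul]
  exact Finset.dvd_sum fun j _ => (h j).mul_right _

lemma Matrix.two_dvd_dotProduct_mulVec_self {G H : Matrix ι ι R} (hG : G = H + Hᵀ)
    (u : ι → R) : 2 ∣ u ⬝ᵥ G *ᵥ u :=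
  ⟨u ⬝ᵥ H *ᵥ u, by
    rw [hG, add_mulVec, dotProduct_add, mulVec_transpose, dotProduct_comm u (u ᵥ* H),
      ← dotProduct_mulVec, two_mul]⟩

end LinearAlgebra

lemma Int.sq_modEq_one_of_odd {a : ℤ} (ha : Odd a) : a ^ 2 ≡ 1 [ZMOD 8] := by
  obtain ⟨b, rfl⟩ := ha
  obtain ⟨r, hr⟩ := Int.even_mul_succ_self b
  exact Int.modEq_iff_dvd.mpr ⟨-r, by linear_combination -4 * hr⟩

def E8negInv : Matrix (Fin 8) (Fin 8) ℤ :=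
  !![-2, -3, -4, -5, -6, -4, -2, -3;
      -3, -6, -8, -10, -12, -8, -4, -6;
      -4, -8, -12, -15, -18, -12, -6, -9;
      -5, -10, -15, -20, -24, -16, -8, -12;
      -6, -12, -18, -24, -30, -20, -10, -15;
      -4, -8, -12, -16, -20, -14, -7, -10;
      -2, -4, -6, -8, -10, -7, -4, -5;
      -3, -6, -9, -12, -15, -10, -5, -8]

def GramKInv : Matrix KIdx KIdx ℤ :=
  fromBlocks (fromBlocks U2 0 0 (fromBlocks U2 0 0 U2)) 0 0 (fromBlocks E8negInv 0 0 E8negInv)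

lemma GramK_mul_GramKInv : GramK * GramKInv = 1 := by decide

def U2Half : Matrix (Fin 2) (Fin 2) ℤ := !![0, 1; 0, 0]

def E8negHalf : Matrix (Fin 8) (Fin 8) ℤ :=
  !![-1, 1, 0, 0, 0, 0, 0, 0;
      0, -1, 1, 0, 0, 0, 0, 0;
      0, 0, -1, 1, 0, 0, 0, 0;
      0, 0, 0, -1, 1, 0, 0, 0;
      0, 0, 0, 0, -1, 1, 0, 1;
      0, 0, 0, 0, 0, -1, 1, 0;
      0, 0, 0, 0, 0, 0, -1, 0;
      0, 0, 0, 0, 0, 0, 0, -1]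

def GramKHalf : Matrix KIdx KIdx ℤ :=
  fromBlocks (fromBlocks U2Half 0 0 (fromBlocks U2Half 0 0 U2Half)) 0 0
    (fromBlocks E8negHalf 0 0 E8negHalf)

lemma GramK_eq_GramKHalf_add_transpose : GramK = GramKHalf + GramKHalfᵀ := by decide

lemma bil_eq (n : ℕ) (v w : LIdx → ℤ) :
    bil n v w = (v ∘ Sum.inl) ⬝ᵥ GramK *ᵥ (w ∘ Sum.inl)
      - (2 * n - 2) * v (Sum.inr 0) * w (Sum.inr 0) := by
  simp [bil, GramL, fromBlocks_mulVec, dotProduct, Fintype.sum_sum_type]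
  ring

lemma bil_single_inl (n : ℕ) (v : LIdx → ℤ) (k : KIdx) :
    bil n v (Pi.single (Sum.inl k) 1) = ((v ∘ Sum.inl) ᵥ* GramK) k := by
  rw [bil, dotProduct_mulVec, dotProduct_single_one, GramL, vecMul_fromBlocks]
  simp

lemma HasDiv.dvd_bil {n : ℕ} {v : LIdx → ℤ} {m : ℤ} (h : HasDiv n v m) (w : LIdx → ℤ) :
    m ∣ bil n v w := by
  rw [← Ideal.mem_span_singleton, ← h]
  exact Ideal.subset_span ⟨w, rfl⟩

lemma IsPrimitive.isUnit_of_forall_dvd {v : LIdx → ℤ} (hv : IsPrimitive v) {d : ℤ}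
    (h : ∀ i, d ∣ v i) : IsUnit d := by
  choose w hw using h
  exact hv d w (funext hw)

/-- in `L_3`, a primitive vector of divisor 4 has `v² ≡ -4 (mod 32)`. -/
theorem stmt_3 (v : LIdx → ℤ) (hprim : IsPrimitive v) (hdiv : HasDiv 3 v 4) :
    bil 3 v v ≡ -4 [ZMOD 32] := by
  have hvK : ∀ k, (4 : ℤ) ∣ v (Sum.inl k) := dvd_of_forall_dvd_vecMul GramK_mul_GramKInv
    fun k => bil_single_inl 3 v k ▸ hdiv.dvd_bil _
  have hodd : Odd (v (Sum.inr 0)) := by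
    rw [← Int.not_even_iff_odd, even_iff_two_dvd]
    intro h2
    have h2v : ∀ i, (2 : ℤ) ∣ v i := by
      rintro (k | j)
      · exact (by norm_num : (2 : ℤ) ∣ 4).trans (hvK k)
      · rwa [Subsingleton.elim j 0]
    exact absurd (Int.isUnit_iff.mp (hprim.isUnit_of_forall_dvd h2v)) (by norm_num)
  choose u hu using hvK
  obtain ⟨m, hm⟩ := two_dvd_dotProduct_mulVec_self GramK_eq_GramKHalf_add_transpose u
  obtain ⟨t, ht⟩ := (Int.sq_modEq_one_of_odd hodd).symm.dvd
  have hK : (v ∘ Sum.inl) ⬝ᵥ GramK *ᵥ (v ∘ Sum.inl) = 16 * (u ⬝ᵥ GramK *ᵥ u) := by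
    rw [show v ∘ Sum.inl = (4 : ℤ) • u from funext hu, mulVec_smul, dotProduct_smul,
      smul_dotProduct, smul_eq_mul, smul_eq_mul]
    ring
  rw [bil_eq, hK, hm, Int.modEq_iff_dvd]
  exact ⟨t - m, by push_cast; linear_combination 4 * ht⟩
end

section
/- Let T = U ⊕ U ⊕ N for some even lattice N (so T contains two orthogonal copies of the hyperbolic plane). Let v, w ∈ T be primitive vectors with v² = w², with div(v) = div(w) = m, and such that v/m and w/m define the same class in the discriminant group T^∨/T. Then there exists an isometry g of T with g(v) = w. -/
/-!
Write `T = U₁ ⊕ U₂ ⊕ N` and let `e₁, f₁` be the standard isotropic basis of `U₁`. All isometries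
used act trivially on the discriminant group, so they keep `v/m` in its class. Each of `v`, `w`
is first moved to a vector `u` with `(u, f₁) = m`: `SL₂(ℤ) × SL₂(ℤ)` acts isometrically on
`U₁ ⊕ U₂ ≅ (M₂(ℤ), det)`, and diagonalising the matrix kills the `U₁`-component of `u`; then, for
`x` with `(u, x) = m` and `z` minus the `U₂ ⊕ N`-part of `x`, the Eichler transvection `E(e₁, z)`
adds `m e₁` to `u`. Two vectors `u, u'` with the same square, both pairing to `m` with `f₁` and
congruent modulo `mT`, differ by the single transvection `E(f₁, (u' - u)/m)`.
-/

open LinearMap (BilinForm)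
open Matrix MatrixGroups

namespace Eichler

section BilinForm

variable {R M : Type*} [CommRing R] [AddCommGroup M] [Module R M]

lemma dvd_and_exists_of_span_range_eq {φ : M →ₗ[R] R} {m : R}
    (h : Ideal.span (Set.range φ) = Ideal.span {m}) : (∀ x, m ∣ φ x) ∧ ∃ x, φ x = m := by
  rw [← LinearMap.coe_range, Ideal.span, Submodule.span_eq] at h
  refine ⟨fun x => Ideal.mem_span_singleton.mp ?_, ?_⟩
  · rw [← h]
    exact LinearMap.mem_range_self φ x
  · exact (h ▸ Ideal.mem_span_singleton_self m : m ∈ LinearMap.range φ)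

/-- Isometries acting trivially on the discriminant group: if `x/m ∈ M^∨` then
`g (x/m) - x/m ∈ M`. -/
def stableIsometries (B : BilinForm R M) : Subgroup (M ≃ₗ[R] M) where
  carrier := {g | (∀ x y, B (g x) (g y) = B x y) ∧
    ∀ (m : R) x, (∀ y, m ∣ B x y) → ∃ t, g x - x = m • t}
  one_mem' := ⟨fun _ _ => rfl, fun _ _ _ => ⟨0, by simp⟩⟩
  mul_mem' := by
    rintro g h ⟨hg, hg'⟩ ⟨hh, hh'⟩
    refine ⟨fun x y => (hg _ _).trans (hh x y), fun m x hx => ?_⟩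
    obtain ⟨s, hs⟩ := hh' m x hx
    obtain ⟨t, ht⟩ := hg' m x hx
    refine ⟨g s + t, ?_⟩
    rw [LinearEquiv.mul_apply, smul_add, ← map_smul, ← hs, ← ht, map_sub]
    abel
  inv_mem' := by
    rintro g ⟨hg, hg'⟩
    have hinv : ∀ x y, B (g⁻¹ x) (g⁻¹ y) = B x y := fun x y => by
      simpa using (hg (g⁻¹ x) (g⁻¹ y)).symm
    refine ⟨hinv, fun m x hx => ?_⟩
    obtain ⟨t, ht⟩ := hg' m (g⁻¹ x) fun y => by simpa [← hinv x] using hx (g y)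
    exact ⟨-t, by rw [smul_neg, ← ht]; simp⟩

variable {B : BilinForm R M} {g : M ≃ₗ[R] M}

lemma apply_apply_of_mem_stableIsometries (hg : g ∈ stableIsometries B) (x y : M) :
    B (g x) (g y) = B x y :=
  hg.1 x y

lemma exists_sub_eq_smul_of_mem_stableIsometries (hg : g ∈ stableIsometries B) {m : R} {x : M}
    (hx : ∀ y, m ∣ B x y) : ∃ t, g x - x = m • t :=
  hg.2 m x hx

variable (B)

/-- The Eichler transvection `t(e, a)` for isotropic `e ⊥ a`; `k` stands for `(a, a)/2`, which keeps
the formula integral. -/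
def eichlerTransvection (e a : M) (k : R) : M →ₗ[R] M :=
  LinearMap.id + (B e).smulRight a - (B a + k • B e).smulRight e

variable {B}

@[simp]
lemma eichlerTransvection_apply (e a : M) (k : R) (x : M) :
    eichlerTransvection B e a k x = x + B e x • a - (B a x + k * B e x) • e := by
  simp [eichlerTransvection]

variable {e a : M} {k : R}

lemma eichlerTransvection_neg_apply (hB : B.IsSymm) (he : B e e = 0) (hea : B e a = 0)
    (hk : B a a = 2 * k) (x : M) :
    eichlerTransvection B e (-a) k (eichlerTransvection B e a k x) = x := by
  have hae : B a e = 0 := by rw [hB.eq, hea]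
  simp only [eichlerTransvection_apply, map_add, map_sub, map_smul, map_neg, LinearMap.neg_apply,
    he, hea, hae, hk]
  module

lemma eichlerTransvection_apply_apply (hB : B.IsSymm) (he : B e e = 0) (hea : B e a = 0)
    (hk : B a a = 2 * k) (x y : M) :
    B (eichlerTransvection B e a k x) (eichlerTransvection B e a k y) = B x y := by
  have hae : B a e = 0 := by rw [hB.eq, hea]
  simp only [eichlerTransvection_apply, map_add, map_sub, map_smul, LinearMap.add_apply,
    LinearMap.sub_apply, LinearMap.smul_apply, smul_eq_mul, he, hea, hae, hk]
  rw [hB.eq x a, hB.eq x e]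
  ring

theorem exists_mem_stableIsometries_eichlerTransvection (hB : B.IsSymm) (he : B e e = 0)
    (hea : B e a = 0) (hk : B a a = 2 * k) :
    ∃ g ∈ stableIsometries B, ∀ x, g x = eichlerTransvection B e a k x := by
  have hea' : B e (-a) = 0 := by simp [hea]
  have hk' : B (-a) (-a) = 2 * k := by simp [hk]
  let g : M ≃ₗ[R] M := .ofLinearMap (eichlerTransvection B e a k) (eichlerTransvection B e (-a) k)
    (LinearMap.ext fun x => by
      simpa using eichlerTransvection_neg_apply hB he hea' hk' x)
    (LinearMap.ext fun x => eichlerTransvection_neg_apply hB he hea hk x)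
  refine ⟨g, ⟨eichlerTransvection_apply_apply hB he hea hk, fun m x hx => ?_⟩, fun x => rfl⟩
  obtain ⟨s, hs⟩ : m ∣ B e x := hB.eq x e ▸ hx e
  obtain ⟨p, hp⟩ := hx a
  refine ⟨s • a - (p + k * s) • e, ?_⟩
  simp only [g, LinearEquiv.coe_ofLinearMap, eichlerTransvection_apply, hs, ← hB.eq x a, hp]
  module

theorem exists_mem_stableIsometries_apply_eq [IsDomain R] [NeZero (2 : R)] (hB : B.IsSymm)
    (heven : ∀ x, 2 ∣ B x x) {f u u' t : M} {m : R} (hf : B f f = 0) (hm : m ≠ 0)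
    (hu : B f u = m) (hu' : B f u' = m) (hsq : B u u = B u' u') (ht : u' - u = m • t) :
    ∃ g ∈ stableIsometries B, g u = u' := by
  have hu'u : u' = u + m • t := by rw [← ht]; abel
  have hft : B f t = 0 := by
    have : m * B f t = 0 := by
      rw [← smul_eq_mul, ← map_smul, ← ht, map_sub, hu, hu', sub_self]
    exact (mul_eq_zero.mp this).resolve_left hm
  obtain ⟨k, hk⟩ := heven t
  obtain ⟨g, hg, hgE⟩ := exists_mem_stableIsometries_eichlerTransvection hB hf hft hk
  have hc : B t u + k * m = 0 := by
    -- `B u' u' = B u u + 2 m (B t u + k m)`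
    have : 2 * m * (B t u + k * m) = 0 := by
      rw [hu'u] at hsq
      simp only [map_add, map_smul, LinearMap.add_apply, LinearMap.smul_apply, smul_eq_mul,
        hk, hB.eq u t] at hsq
      linear_combination -hsq
    exact (mul_eq_zero.mp this).resolve_left (mul_ne_zero two_ne_zero hm)
  refine ⟨g, hg, ?_⟩
  rw [hgE, eichlerTransvection_apply, hu, hc, hu'u]
  simp

end BilinForm

section SL2

lemma exists_SL2_bezout (p q : ℤ) :
    ∃ γ : SL(2, ℤ), γ 0 0 * p + γ 0 1 * q = Int.gcd p q ∧ γ 1 0 * p + γ 1 1 * q = 0 := by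
  by_cases hg : Int.gcd p q = 0
  · obtain ⟨rfl, rfl⟩ := Int.gcd_eq_zero_iff.mp hg
    exact ⟨1, by simp, by simp⟩
  obtain ⟨p', hp'⟩ := Int.gcd_dvd_left p q
  obtain ⟨q', hq'⟩ := Int.gcd_dvd_right p q
  have hbez : p' * Int.gcdA p q + q' * Int.gcdB p q = 1 := by
    apply mul_left_cancel₀ (Int.natCast_ne_zero.mpr hg)
    linear_combination -Int.gcd_eq_gcd_ab p q - Int.gcdA p q * hp' - Int.gcdB p q * hq'
  refine ⟨⟨!![Int.gcdA p q, Int.gcdB p q; -q', p'], by rw [det_fin_two_of]; linarith⟩, ?_, ?_⟩ <;>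
    simp only [of_apply, cons_val', cons_val_zero, cons_val_one, empty_val', cons_val_fin_one]
  · linear_combination -Int.gcd_eq_gcd_ab p q
  · linear_combination -q' * hp' + p' * hq'

lemma exists_SL2_mul_apply_eq_gcd (A : Matrix (Fin 2) (Fin 2) ℤ) :
    ∃ γ : SL(2, ℤ), (γ * A) 0 0 = Int.gcd (A 0 0) (A 1 0) ∧ (γ * A) 1 0 = 0 := by
  simpa [mul_apply, Fin.sum_univ_two] using exists_SL2_bezout (A 0 0) (A 1 0)

lemma exists_SL2_apply_mul_eq_gcd (A : Matrix (Fin 2) (Fin 2) ℤ) :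
    ∃ δ : SL(2, ℤ), (A * δ) 0 0 = Int.gcd (A 0 0) (A 0 1) ∧ (A * δ) 0 1 = 0 := by
  obtain ⟨γ, h₀, h₁⟩ := exists_SL2_bezout (A 0 0) (A 0 1)
  exact ⟨γ.transpose, by simpa [mul_apply, Fin.sum_univ_two, mul_comm] using h₀,
    by simpa [mul_apply, Fin.sum_univ_two, mul_comm] using h₁⟩

lemma SL2_inv_mul_mul_mul_inv (γ δ : SL(2, ℤ)) (A : Matrix (Fin 2) (Fin 2) ℤ) :
    (γ⁻¹ * (γ * A * δ) * δ⁻¹ : Matrix (Fin 2) (Fin 2) ℤ) = A := by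
  simp only [Matrix.SpecialLinearGroup.coe_inv, ← mul_assoc, adjugate_mul,
    Matrix.SpecialLinearGroup.det_coe, one_smul, one_mul]
  simp only [mul_assoc, mul_adjugate, Matrix.SpecialLinearGroup.det_coe, one_smul, mul_one]

lemma exists_isDiag_of_mul_mul {A : Matrix (Fin 2) (Fin 2) ℤ} (γ₁ δ₁ : SL(2, ℤ))
    (h : ∃ γ δ : SL(2, ℤ), (γ * (γ₁ * A * δ₁) * δ).IsDiag) :
    ∃ γ δ : SL(2, ℤ), (γ * A * δ).IsDiag := by
  obtain ⟨γ, δ, hd⟩ := h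
  exact ⟨γ * γ₁, δ₁ * δ, by simpa [mul_assoc] using hd⟩

lemma exists_isDiag_of_ne_zero {A : Matrix (Fin 2) (Fin 2) ℤ} (hA : A 0 0 ≠ 0) :
    ∃ γ δ : SL(2, ℤ), (γ * A * δ).IsDiag := by
  induction hn : (A 0 0).natAbs using Nat.strong_induction_on generalizing A with
  | _ n ih =>
  obtain ⟨γ, hγ₀, hγ₁⟩ := exists_SL2_mul_apply_eq_gcd A
  set A' : Matrix (Fin 2) (Fin 2) ℤ := γ * A
  have hg : Int.gcd (A 0 0) (A 1 0) ≤ n := hn ▸ Nat.gcd_le_left _ (Int.natAbs_pos.mpr hA)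
  by_cases hdvd : A' 0 0 ∣ A' 0 1
  · obtain ⟨c, hc⟩ := hdvd
    refine ⟨γ, ⟨!![1, -c; 0, 1], by simp [det_fin_two_of]⟩, ?_⟩
    intro i j hij
    fin_cases i <;> fin_cases j <;> simp_all [mul_apply, Fin.sum_univ_two, A']
  -- Otherwise a Bezout step on the first row replaces the corner by a proper divisor of itself.
  obtain ⟨δ, hδ₀, -⟩ := exists_SL2_apply_mul_eq_gcd A'
  refine exists_isDiag_of_mul_mul γ δ (ih _ ?_ ?_ rfl)
  · have hlt : Int.gcd (A' 0 0) (A' 0 1) < Int.gcd (A 0 0) (A 1 0) := by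
      refine lt_of_le_of_ne ?_ fun heq => hdvd ?_
      · rw [hγ₀]
        exact Nat.gcd_le_left _ (Int.gcd_pos_of_ne_zero_left _ hA)
      · rw [hγ₀, ← heq]
        exact Int.gcd_dvd_right _ _
    rw [hδ₀, Int.natAbs_natCast]
    omega
  · rw [hδ₀, Int.natCast_ne_zero, Ne, Int.gcd_eq_zero_iff, hγ₀]
    exact fun h => hA (Int.gcd_eq_zero_iff.mp (by exact_mod_cast h.1)).1

theorem exists_isDiag (A : Matrix (Fin 2) (Fin 2) ℤ) : ∃ γ δ : SL(2, ℤ), (γ * A * δ).IsDiag := by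
  obtain ⟨γ, -, hγ₁⟩ := exists_SL2_mul_apply_eq_gcd A
  by_cases hg : (γ * A) 0 0 = 0
  -- The first column of `γ * A` vanishes, and `J` moves the second column into its place.
  · let J : SL(2, ℤ) := ⟨!![0, 1; -1, 0], by simp [det_fin_two_of]⟩
    obtain ⟨γ', -, hγ'⟩ := exists_SL2_mul_apply_eq_gcd (γ * A * J)
    refine exists_isDiag_of_mul_mul γ J ⟨γ', 1, ?_⟩
    intro i j hij
    fin_cases i <;> fin_cases j <;> simp_all [mul_apply, Fin.sum_univ_two, J]
  · exact exists_isDiag_of_mul_mul γ 1 (by simpa using exists_isDiag_of_ne_zero hg)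

end SL2

section Lattice

/-- `U₁ ⊕ U₂ ⊕ N`, with `e₁ = (![1, 0], 0, 0)` and `f₁ = (![0, 1], 0, 0)`. -/
abbrev T (N : Type*) := (Fin 2 → ℤ) × (Fin 2 → ℤ) × N

variable {N : Type*}

def ofMatrix (A : Matrix (Fin 2) (Fin 2) ℤ) (n : N) : T N := (![A 0 1, -A 1 0], ![A 0 0, A 1 1], n)

@[simp]
lemma ofMatrix_snd_snd (A : Matrix (Fin 2) (Fin 2) ℤ) (n : N) : (ofMatrix A n).2.2 = n := rfl

variable [AddCommGroup N]

/-- The `U₁ ⊕ U₂`-part as a matrix, with `U₁` off the diagonal: the form on `U₁ ⊕ U₂` becomes the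
polarised determinant, and `x.1 = 0` iff `toMatrix x` is diagonal. -/
def toMatrix : T N →ₗ[ℤ] Matrix (Fin 2) (Fin 2) ℤ where
  toFun x := !![x.2.1 0, x.1 0; -x.1 1, x.2.1 1]
  map_add' x y := by ext i j; fin_cases i <;> fin_cases j <;> simp [add_comm]
  map_smul' c x := by ext i j; fin_cases i <;> fin_cases j <;> simp

@[simp]
lemma toMatrix_ofMatrix (A : Matrix (Fin 2) (Fin 2) ℤ) (n : N) : toMatrix (ofMatrix A n) = A := by
  ext i j; fin_cases i <;> fin_cases j <;> simp [toMatrix, ofMatrix]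

@[simp]
lemma ofMatrix_toMatrix (x : T N) : ofMatrix (toMatrix x) x.2.2 = x := by
  refine Prod.ext ?_ (Prod.ext ?_ rfl) <;> ext i <;> fin_cases i <;> simp [toMatrix, ofMatrix]

lemma ofMatrix_add (A B : Matrix (Fin 2) (Fin 2) ℤ) (n n' : N) :
    ofMatrix (A + B) (n + n') = ofMatrix A n + ofMatrix B n' := by
  refine Prod.ext ?_ (Prod.ext ?_ rfl) <;> ext i <;> fin_cases i <;> simp [ofMatrix, add_comm]

lemma ofMatrix_sub (A B : Matrix (Fin 2) (Fin 2) ℤ) (n n' : N) :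
    ofMatrix (A - B) (n - n') = ofMatrix A n - ofMatrix B n' := by
  refine Prod.ext ?_ (Prod.ext ?_ rfl) <;> ext i <;> fin_cases i <;> simp [ofMatrix, neg_add_eq_sub]

lemma ofMatrix_smul (c : ℤ) (A : Matrix (Fin 2) (Fin 2) ℤ) (n : N) :
    ofMatrix (c • A) (c • n) = c • ofMatrix A n := by
  refine Prod.ext ?_ (Prod.ext ?_ rfl) <;> ext i <;> fin_cases i <;> simp [ofMatrix]

def sl2Equiv (γ δ : SL(2, ℤ)) : T N ≃ₗ[ℤ] T N where
  toFun x := ofMatrix (γ * toMatrix x * δ) x.2.2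
  invFun x := ofMatrix (γ⁻¹ * toMatrix x * δ⁻¹) x.2.2
  map_add' x y := by simp [mul_add, add_mul, ofMatrix_add]
  map_smul' c x := by
    simp only [map_smul, Matrix.mul_smul, Matrix.smul_mul, Prod.smul_snd, ofMatrix_smul,
      RingHom.id_apply]
  left_inv x := by
    simp only [toMatrix_ofMatrix, ofMatrix_snd_snd, SL2_inv_mul_mul_mul_inv, ofMatrix_toMatrix]
  right_inv x := by
    simpa only [toMatrix_ofMatrix, ofMatrix_snd_snd, inv_inv, ofMatrix_toMatrix] using
      congrArg (ofMatrix · x.2.2) (SL2_inv_mul_mul_mul_inv γ⁻¹ δ⁻¹ (toMatrix x))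

lemma sl2Equiv_apply (γ δ : SL(2, ℤ)) (x : T N) :
    sl2Equiv γ δ x = ofMatrix (γ * toMatrix x * δ) x.2.2 := rfl

variable [Module ℤ N] (BN : N →ₗ[ℤ] N →ₗ[ℤ] ℤ)

def form : BilinForm ℤ (T N) :=
  LinearMap.mk₂ ℤ
    (fun x y => x.1 0 * y.1 1 + x.1 1 * y.1 0 + x.2.1 0 * y.2.1 1 + x.2.1 1 * y.2.1 0 +
      BN x.2.2 y.2.2)
    (fun x x' y => by simp only [Prod.fst_add, Pi.add_apply, Prod.snd_add, map_add,
      LinearMap.add_apply]; ring)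
    (fun c x y => by simp only [Prod.smul_fst, Pi.smul_apply, Int.zsmul_eq_mul, Prod.smul_snd,
      LinearMap.map_smul_of_tower, LinearMap.smul_apply]; ring)
    (fun x y y' => by simp only [Prod.fst_add, Pi.add_apply, Prod.snd_add, map_add]; ring)
    (fun c x y => by simp only [Prod.smul_fst, Pi.smul_apply, Int.zsmul_eq_mul, Prod.smul_snd,
      LinearMap.map_smul_of_tower]; ring)

@[simp]
lemma form_apply (x y : T N) : form BN x y = x.1 0 * y.1 1 + x.1 1 * y.1 0 +
    x.2.1 0 * y.2.1 1 + x.2.1 1 * y.2.1 0 + BN x.2.2 y.2.2 := rfl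

variable {BN}

lemma form_isSymm (hsymm : ∀ x y, BN x y = BN y x) : (form BN).IsSymm :=
  ⟨fun x y => by simp only [form_apply, hsymm x.2.2]; ring⟩

lemma two_dvd_form_self (heven : ∀ x, 2 ∣ BN x x) (x : T N) : 2 ∣ form BN x x := by
  obtain ⟨k, hk⟩ := heven x.2.2
  exact ⟨x.1 0 * x.1 1 + x.2.1 0 * x.2.1 1 + k, by rw [form_apply, hk]; ring⟩

lemma form_eq_det (x y : T N) : form BN x y =
    (toMatrix x + toMatrix y).det - (toMatrix x).det - (toMatrix y).det + BN x.2.2 y.2.2 := by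
  simp only [form_apply, toMatrix, LinearMap.coe_mk, AddHom.coe_mk, of_add_of, add_cons, head_cons,
    tail_cons, empty_add_empty, det_fin_two_of]
  ring

lemma exists_toMatrix_eq_smul {m : ℤ} {x : T N} (hx : ∀ y, m ∣ form BN x y) :
    ∃ A, toMatrix x = m • A := by
  have hdvd : ∀ i j, m ∣ toMatrix x i j := by
    intro i j
    fin_cases i <;> fin_cases j
    · simpa [toMatrix] using hx (0, ![0, 1], 0)
    · simpa [toMatrix] using hx (![0, 1], 0, 0)
    · simpa [toMatrix] using hx (![1, 0], 0, 0)
    · simpa [toMatrix] using hx (0, ![1, 0], 0)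
  exact ⟨fun i j => toMatrix x i j / m,
    by ext i j; exact (Int.mul_ediv_cancel' (hdvd i j)).symm⟩

lemma sl2Equiv_mem_stableIsometries (γ δ : SL(2, ℤ)) :
    sl2Equiv γ δ ∈ stableIsometries (form BN) := by
  refine ⟨fun x y => ?_, fun m x hx => ?_⟩
  · simp only [form_eq_det, sl2Equiv_apply, toMatrix_ofMatrix, ofMatrix_snd_snd, ← mul_add,
      ← add_mul, det_mul, γ.2, δ.2, one_mul, mul_one]
  · obtain ⟨A, hA⟩ := exists_toMatrix_eq_smul hx
    refine ⟨ofMatrix (γ * A * δ - A) 0, ?_⟩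
    calc sl2Equiv γ δ x - x
        = ofMatrix (γ * toMatrix x * δ) x.2.2 - ofMatrix (toMatrix x) x.2.2 := by
          rw [sl2Equiv_apply, ofMatrix_toMatrix]
      _ = ofMatrix (γ * toMatrix x * δ - toMatrix x) 0 := by rw [← ofMatrix_sub, sub_self]
      _ = m • ofMatrix (γ * A * δ - A) 0 := by
          simp only [hA, ← ofMatrix_smul, zsmul_zero, smul_sub, Matrix.mul_smul, Matrix.smul_mul]

lemma exists_mem_stableIsometries_fst_eq_zero (u : T N) :
    ∃ g ∈ stableIsometries (form BN), (g u).1 = 0 := by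
  obtain ⟨γ, δ, hd⟩ := exists_isDiag (toMatrix u)
  refine ⟨sl2Equiv γ δ, sl2Equiv_mem_stableIsometries γ δ, ?_⟩
  ext i
  fin_cases i
  · simpa [sl2Equiv_apply, ofMatrix] using hd (by decide : (0 : Fin 2) ≠ 1)
  · simpa [sl2Equiv_apply, ofMatrix] using hd (by decide : (1 : Fin 2) ≠ 0)

lemma exists_mem_stableIsometries_fst_apply_eq (hsymm : ∀ x y, BN x y = BN y x)
    (heven : ∀ x, 2 ∣ BN x x) {m : ℤ} {u x : T N} (hx : form BN u x = m) :
    ∃ g ∈ stableIsometries (form BN), (g u).1 0 = m := by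
  obtain ⟨g, hg, hgu⟩ := exists_mem_stableIsometries_fst_eq_zero (BN := BN) u
  have hx' : form BN (g u) (g x) = m := by rw [apply_apply_of_mem_stableIsometries hg, hx]
  -- `g u ⊥ U₁`, so `E(e₁, z)` with `z` the `U₂ ⊕ N`-part of `-g x` moves `g u` by `m e₁`.
  set z : T N := (0, -(g x).2.1, -(g x).2.2)
  obtain ⟨k, hk⟩ := two_dvd_form_self heven z
  obtain ⟨h, hh, hhE⟩ := exists_mem_stableIsometries_eichlerTransvection (form_isSymm hsymm)
    (e := (![1, 0], 0, 0)) (by simp) (by simp [z]) hk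
  refine ⟨h * g, mul_mem hh hg, ?_⟩
  have h₀ : (g u).1 0 = 0 := by rw [hgu]; rfl
  have h₁ : (g u).1 1 = 0 := by rw [hgu]; rfl
  have he : form BN (![1, 0], 0, 0) (g u) = 0 := by simp [h₁]
  have hz : form BN z (g u) = -m := by
    rw [← hx', (form_isSymm hsymm).eq (g u)]
    simp [z, h₀, h₁, add_comm]
  rw [LinearEquiv.mul_apply, hhE, eichlerTransvection_apply, he, hz]
  simp [h₀]

end Lattice

end Eichler

open Eichler in
theorem stmt_16_general (N : Type) [AddCommGroup N] [Module ℤ N]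
    (BN : N →ₗ[ℤ] N →ₗ[ℤ] ℤ)
    (hsymm : ∀ x y : N, BN x y = BN y x)
    (heven : ∀ x : N, 2 ∣ BN x x)
    (B : (Fin 2 → ℤ) × (Fin 2 → ℤ) × N → (Fin 2 → ℤ) × (Fin 2 → ℤ) × N → ℤ)
    (hB : ∀ p q, B p q =
      p.1 0 * q.1 1 + p.1 1 * q.1 0 +
      p.2.1 0 * q.2.1 1 + p.2.1 1 * q.2.1 0 + BN p.2.2 q.2.2)
    (v w : (Fin 2 → ℤ) × (Fin 2 → ℤ) × N)
    (hsq : B v v = B w w)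
    (m : ℤ) (hm : 0 < m)
    (hdv : Ideal.span (Set.range fun x => B v x) = Ideal.span {m})
    (hdw : Ideal.span (Set.range fun x => B w x) = Ideal.span {m})
    (hdisc : ∃ t : (Fin 2 → ℤ) × (Fin 2 → ℤ) × N, v - w = m • t) :
    ∃ g : ((Fin 2 → ℤ) × (Fin 2 → ℤ) × N) ≃ₗ[ℤ]
        ((Fin 2 → ℤ) × (Fin 2 → ℤ) × N),
      (∀ x y, B (g x) (g y) = B x y) ∧ g v = w := by
  obtain rfl : B = fun p q => form BN p q := funext₂ hB
  obtain ⟨hvm, xv, hxv⟩ := dvd_and_exists_of_span_range_eq hdv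
  obtain ⟨hwm, xw, hxw⟩ := dvd_and_exists_of_span_range_eq hdw
  obtain ⟨gv, hgv, hgvm⟩ := exists_mem_stableIsometries_fst_apply_eq hsymm heven hxv
  obtain ⟨gw, hgw, hgwm⟩ := exists_mem_stableIsometries_fst_apply_eq hsymm heven hxw
  obtain ⟨sv, hsv⟩ := exists_sub_eq_smul_of_mem_stableIsometries hgv hvm
  obtain ⟨sw, hsw⟩ := exists_sub_eq_smul_of_mem_stableIsometries hgw hwm
  obtain ⟨t, ht⟩ := hdisc
  obtain ⟨h, hh, hvw⟩ := exists_mem_stableIsometries_apply_eq (form_isSymm hsymm)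
    (two_dvd_form_self heven) (f := (![0, 1], 0, 0)) (by simp) hm.ne' (by simpa using hgvm)
    (by simpa using hgwm)
    (by rwa [apply_apply_of_mem_stableIsometries hgv, apply_apply_of_mem_stableIsometries hgw])
    (t := sw - t - sv) (by simp only [zsmul_sub, ← hsw, ← ht, ← hsv]; abel)
  have hg := mul_mem (mul_mem (inv_mem hgw) hh) hgv
  refine ⟨gw⁻¹ * h * gv, apply_apply_of_mem_stableIsometries hg, ?_⟩
  simp [hvw]

/-- Eichler criterion: in `T = U ⊕ U ⊕ N` with `N` an even
lattice, two primitive vectors with the same square, the same divisor `m`, and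
the same discriminant class (i.e. `v - w ∈ mT`) are related by an isometry. -/
theorem stmt_16 (N : Type) [AddCommGroup N] [Module ℤ N]
    [Module.Free ℤ N] [Module.Finite ℤ N]
    (BN : N →ₗ[ℤ] N →ₗ[ℤ] ℤ)
    (hsymm : ∀ x y : N, BN x y = BN y x)
    (heven : ∀ x : N, 2 ∣ BN x x)
    (hnondeg : ∀ x : N, (∀ y : N, BN x y = 0) → x = 0)
    (B : (Fin 2 → ℤ) × (Fin 2 → ℤ) × N → (Fin 2 → ℤ) × (Fin 2 → ℤ) × N → ℤ)
    (hB : ∀ p q, B p q =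
      p.1 0 * q.1 1 + p.1 1 * q.1 0 +
      p.2.1 0 * q.2.1 1 + p.2.1 1 * q.2.1 0 + BN p.2.2 q.2.2)
    (v w : (Fin 2 → ℤ) × (Fin 2 → ℤ) × N)
    (hvprim : ∀ (k : ℤ) x, v = k • x → IsUnit k)
    (hwprim : ∀ (k : ℤ) x, w = k • x → IsUnit k)
    (hsq : B v v = B w w)
    (m : ℤ) (hm : 0 < m)
    (hdv : Ideal.span (Set.range fun x => B v x) = Ideal.span {m})
    (hdw : Ideal.span (Set.range fun x => B w x) = Ideal.span {m})
    (hdisc : ∃ t : (Fin 2 → ℤ) × (Fin 2 → ℤ) × N, v - w = m • t) :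
    ∃ g : ((Fin 2 → ℤ) × (Fin 2 → ℤ) × N) ≃ₗ[ℤ]
        ((Fin 2 → ℤ) × (Fin 2 → ℤ) × N),
      (∀ x y, B (g x) (g y) = B x y) ∧ g v = w :=
  stmt_16_general N BN hsymm heven B hB v w hsq m hm hdv hdw hdisc
end
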